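/- Let the FNN output be y(x) = Σ_{k=1}^n f(x^(k)) z_k^(2)(x), where z_k^(2) is the second-hidden-layer output. If x lies in the open Voronoi cell of x^(k) (strict inequalities ‖x - x^(k)‖₂ < ‖x - x^(j)‖₂ for all j ≠ k), then y(x) = f(x^(k)). -/
import Mathlib


open scoped RealInnerProductSpace

theorem stmt_8 {d n : ℕ} (hn : 2 ≤ n) (x : Fin n → EuclideanSpace ℝ (Fin d))
    (hx : Function.Injective x) (f : EuclideanSpace ℝ (Fin d) → ℝ)
    (s : ℝ → ℝ) (hs : ∀ t, s t = if 0 ≤ t then 1 else 0)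
    (k : Fin n) (p : EuclideanSpace ℝ (Fin d))
    (hp : ∀ j, j ≠ k → ‖p - x k‖ < ‖p - x j‖) :
    (∑ m : Fin n, f (x m) *
        s ((∑ j ∈ Finset.univ.erase m,
              s (⟪x m - x j, p⟫ - (1 / 2) * ⟪x m - x j, x m + x j⟫)) - (n - 1)))
      = f (x k) := by
  have key : ∀ m j : Fin n,
      ⟪x m - x j, p⟫ - (1 / 2) * ⟪x m - x j, x m + x j⟫
        = (1 / 2) * (‖p - x j‖ ^ 2 - ‖p - x m‖ ^ 2) := by
    intro m j
    rw [← real_inner_self_eq_norm_sq, ← real_inner_self_eq_norm_sq]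
    simp only [inner_sub_left, inner_sub_right, inner_add_left, inner_add_right,
      real_inner_comm p (x j), real_inner_comm p (x m), real_inner_comm (x j) (x m)]
    ring
  have hterm : ∀ m j : Fin n,
      s (⟪x m - x j, p⟫ - (1 / 2) * ⟪x m - x j, x m + x j⟫)
        = if ‖p - x m‖ ≤ ‖p - x j‖ then 1 else 0 := by
    intro m j
    rw [hs, key]
    congr 1
    simp only [eq_iff_iff]
    constructor <;> intro h <;>
      nlinarith [norm_nonneg (p - x m), norm_nonneg (p - x j)]
  have hcard : (Finset.univ.erase k).card = n - 1 := by
    simp [Finset.card_erase_of_mem]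
  rw [Finset.sum_eq_single k]
  · -- m = k case
    have hsum : (∑ j ∈ Finset.univ.erase k,
        s (⟪x k - x j, p⟫ - (1 / 2) * ⟪x k - x j, x k + x j⟫)) = (n : ℝ) - 1 := by
      rw [show (∑ j ∈ Finset.univ.erase k,
          s (⟪x k - x j, p⟫ - (1 / 2) * ⟪x k - x j, x k + x j⟫)) = ∑ _j ∈ Finset.univ.erase k, (1:ℝ) from
        Finset.sum_congr rfl fun j hj => by
          rw [hterm, if_pos (le_of_lt (hp j (Finset.ne_of_mem_erase hj)))]]
      rw [Finset.sum_const, hcard, nsmul_eq_mul, mul_one,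
        Nat.cast_sub (by omega : 1 ≤ n), Nat.cast_one]
    rw [hsum]
    simp only [sub_self]
    rw [hs]
    simp
  · -- m ≠ k case
    intro m _ hm
    have hk : k ∈ Finset.univ.erase m := Finset.mem_erase.2 ⟨Ne.symm hm, Finset.mem_univ k⟩
    have hsum_le : (∑ j ∈ Finset.univ.erase m,
        s (⟪x m - x j, p⟫ - (1 / 2) * ⟪x m - x j, x m + x j⟫)) ≤ (n : ℝ) - 2 := by
      rw [← Finset.add_sum_erase _ _ hk]
      have h0 : s (⟪x m - x k, p⟫ - (1 / 2) * ⟪x m - x k, x m + x k⟫) = 0 := by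
        rw [hterm, if_neg]
        exact not_le.2 (hp m hm)
      rw [h0, zero_add]
      calc (∑ j ∈ (Finset.univ.erase m).erase k,
            s (⟪x m - x j, p⟫ - (1 / 2) * ⟪x m - x j, x m + x j⟫))
          ≤ ∑ j ∈ (Finset.univ.erase m).erase k, (1 : ℝ) := by
            apply Finset.sum_le_sum
            intro j _
            rw [hterm]
            split <;> norm_num
        _ = ((Finset.univ.erase m).erase k).card := by simp
        _ ≤ (n : ℝ) - 2 := by
            have : ((Finset.univ.erase m).erase k).card = n - 2 := by
              rw [Finset.card_erase_of_mem hk, Finset.card_erase_of_mem (Finset.mem_univ m)]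
              simp only [Finset.card_univ, Fintype.card_fin]
              omega
            rw [this]
            push_cast [Nat.cast_sub (by omega : 2 ≤ n)]
            ring_nf
            rfl
    have : (∑ j ∈ Finset.univ.erase m,
        s (⟪x m - x j, p⟫ - (1 / 2) * ⟪x m - x j, x m + x j⟫)) - ((n : ℝ) - 1) < 0 := by
      linarith
    rw [hs, if_neg (not_le.2 this), mul_zero]
  · intro h
    exact absurd (Finset.mem_univ k) h
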